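/- Fix a positive integer n with S enumerated increasingly as s₁ < … < s_m, and let T be the m × m 0-1 matrix with T_{a,b} = 1 iff a + b ≤ m + 1. For i = s_a and j = s_b in S and any k ∈ S, letting ρ(k) be the m × m 0-1 matrix with ρ(k)_{c,b} = 1 iff ⌊n/s_c⌋ = ⌊n/(k s_b)⌋ (and ks_b ≤ n), we have (T ρ(k))_{a,b} = 1 if and only if s_a s_b k ≤ n. In particular T ρ(k) is a symmetric matrix. -/

import Mathlib

/-!
Every value `⌊n/j⌋ ≥ 1` is a jump point of `k ↦ ⌊n/k⌋`, so `x ↦ ⌊n/x⌋` maps `S` into itself,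
strictly decreasingly. As `s` enumerates `S` increasingly, this forces `s_{m+1-a} = ⌊n/s_a⌋`.
Hence, when `k s_b ≤ n`, column `b` of `ρ(k)` has a single one, in the row `c` with
`s_{m+1-c} = ⌊n/(k s_b)⌋`, and `T_{a,c} = 1` iff `s_a ≤ ⌊n/(k s_b)⌋`, i.e. iff `s_a s_b k ≤ n`.
-/

open Finset

namespace Nat

variable {n x y j : ℕ}

def divJumps (n : ℕ) : Finset ℕ :=
  (Icc 1 n).filter fun k => n / (k + 1) < n / k

theorem mem_divJumps : x ∈ divJumps n ↔ n / (x + 1) < n / x := by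
  refine ⟨fun hx => (mem_filter.1 hx).2, fun h => mem_filter.2 ⟨?_, h⟩⟩
  have := Nat.div_pos_iff.1 ((Nat.zero_le _).trans_lt h)
  exact mem_Icc.2 ⟨this.1, this.2⟩

theorem div_pos_of_mem_divJumps (hx : x ∈ divJumps n) : 0 < n / x :=
  (Nat.zero_le _).trans_lt (mem_divJumps.1 hx)

theorem pos_of_mem_divJumps (hx : x ∈ divJumps n) : 0 < x :=
  (Nat.div_pos_iff.1 (div_pos_of_mem_divJumps hx)).1

theorem div_mem_divJumps (h : 0 < n / j) : n / j ∈ divJumps n := by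
  have hj : 0 < j := (Nat.div_pos_iff.1 h).1
  refine mem_divJumps.2 (calc
    n / (n / j + 1) < j := (Nat.div_lt_iff_lt_mul (Nat.succ_pos _)).2 (Nat.lt_mul_div_succ n hj)
    _ ≤ n / (n / j) := (Nat.le_div_iff_mul_le h).2 (Nat.mul_div_le n j))

theorem div_lt_div_of_mem_divJumps (hx : x ∈ divJumps n) (hxy : x < y) : n / y < n / x :=
  (Nat.div_le_div_left hxy x.succ_pos).trans_lt (mem_divJumps.1 hx)

theorem orderEmbOfFin_divJumps_rev {m : ℕ} (hm : (divJumps n).card = m) (a : Fin m) :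
    (divJumps n).orderEmbOfFin hm a.rev = n / (divJumps n).orderEmbOfFin hm a := by
  set s := (divJumps n).orderEmbOfFin hm
  have hrev : (fun a => n / s a.rev) = s := by
    refine orderEmbOfFin_unique hm (fun a => div_mem_divJumps ?_) fun a b hab => ?_
    · exact div_pos_of_mem_divJumps (orderEmbOfFin_mem _ hm _)
    · exact div_lt_div_of_mem_divJumps (orderEmbOfFin_mem _ hm _)
        (s.strictMono (Fin.rev_lt_rev.2 hab))
  simpa using (congrFun hrev a.rev).symm

end Nat

open Nat in
theorem antitriangle_mul_apply {n m k : ℕ} (hm : (divJumps n).card = m) (hk : k ∈ divJumps n)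
    {T ρ : Matrix (Fin m) (Fin m) ℕ}
    (hT : ∀ a b, T a b = if (a : ℕ) + 1 + ((b : ℕ) + 1) ≤ m + 1 then 1 else 0)
    (hρ : ∀ c b, ρ c b = if k * (divJumps n).orderEmbOfFin hm b ≤ n ∧
      n / (divJumps n).orderEmbOfFin hm c = n / (k * (divJumps n).orderEmbOfFin hm b) then 1 else 0)
    (a b : Fin m) :
    (T * ρ) a b =
      if (divJumps n).orderEmbOfFin hm a * (divJumps n).orderEmbOfFin hm b * k ≤ n then 1 else 0 := by
  set s := (divJumps n).orderEmbOfFin hm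
  have hs_pos (c : Fin m) : 0 < s c := pos_of_mem_divJumps (orderEmbOfFin_mem _ hm c)
  rw [Matrix.mul_apply]
  by_cases hkb : k * s b ≤ n
  · have hksb : 0 < k * s b := Nat.mul_pos (pos_of_mem_divJumps hk) (hs_pos b)
    obtain ⟨i, hi⟩ : ∃ i, s i = n / (k * s b) := by
      rw [← Set.mem_range, range_orderEmbOfFin]
      exact div_mem_divJumps (Nat.div_pos hkb hksb)
    have hcol : ∀ c, ρ c b = if c = i.rev then 1 else 0 := fun c => by
      have : n / s c = s i ↔ c = i.rev := by
        rw [← orderEmbOfFin_divJumps_rev, s.injective.eq_iff, Fin.rev_eq_iff]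
      simp only [hρ, ← hi, this, hkb, true_and]
    have hrow : (a : ℕ) + 1 + ((i.rev : ℕ) + 1) ≤ m + 1 ↔ s a * s b * k ≤ n := by
      rw [show s a * s b * k = s a * (k * s b) by ring, ← Nat.le_div_iff_mul_le hksb,
        ← hi, s.le_iff_le, Fin.le_def, Fin.val_rev]
      omega
    simp_rw [hcol, mul_ite, mul_one, mul_zero, sum_ite_eq', mem_univ, if_true, hT, hrow]
  · have hcol : ∀ c, ρ c b = 0 := fun c => by simp [hρ, hkb]
    have : ¬ s a * s b * k ≤ n := fun h => hkb <| le_trans (by nlinarith [hs_pos a]) h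
    simp [hcol, this]

theorem T_rho_symm_general (n : ℕ)
    (S : Finset ℕ) (hS : S = (Finset.Icc 1 n).filter (fun k => n / (k + 1) < n / k))
    (m : ℕ) (hm : S.card = m)
    (s : Fin m → ℕ) (hs : ∀ a, s a = (S.orderIsoOfFin hm a : ℕ))
    (T : Matrix (Fin m) (Fin m) ℕ)
    (hT : ∀ a b, T a b = if (a : ℕ) + 1 + ((b : ℕ) + 1) ≤ m + 1 then 1 else 0)
    (k : ℕ) (hk : k ∈ S)
    (ρ : Matrix (Fin m) (Fin m) ℕ)
    (hρ : ∀ c b, ρ c b = if k * s b ≤ n ∧ n / s c = n / (k * s b) then 1 else 0) :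
    (∀ a b, (T * ρ) a b = 1 ↔ s a * s b * k ≤ n) ∧
    (∀ a b, (T * ρ) a b = (T * ρ) b a) := by
  subst hS
  obtain rfl : s = (Nat.divJumps n).orderEmbOfFin hm :=
    funext fun a => by rw [hs, coe_orderIsoOfFin_apply]; rfl
  have entry := antitriangle_mul_apply hm hk hT hρ
  refine ⟨fun a b => ?_, fun a b => ?_⟩
  · rw [entry]
    split_ifs with h <;> simp [h]
  · rw [entry, entry, mul_comm ((Nat.divJumps n).orderEmbOfFin hm a)]

theorem T_rho_symm (n : ℕ) (hn : 0 < n)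
    (S : Finset ℕ) (hS : S = (Finset.Icc 1 n).filter (fun k => n / (k + 1) < n / k))
    (m : ℕ) (hm : S.card = m)
    (s : Fin m → ℕ) (hs : ∀ a, s a = (S.orderIsoOfFin hm a : ℕ))
    (T : Matrix (Fin m) (Fin m) ℕ)
    (hT : ∀ a b, T a b = if (a : ℕ) + 1 + ((b : ℕ) + 1) ≤ m + 1 then 1 else 0)
    (k : ℕ) (hk : k ∈ S)
    (ρ : Matrix (Fin m) (Fin m) ℕ)
    (hρ : ∀ c b, ρ c b = if k * s b ≤ n ∧ n / s c = n / (k * s b) then 1 else 0) :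
    (∀ a b, (T * ρ) a b = 1 ↔ s a * s b * k ≤ n) ∧
    (∀ a b, (T * ρ) a b = (T * ρ) b a) :=
  T_rho_symm_general n S hS m hm s hs T hT k hk ρ hρ
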